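/- Let x₀ ∈ X, g̃ ∈ ℝ^n and α > 0, and let x⁺ be a minimizer over x ∈ X of ⟨g̃, x − x₀⟩ + (1/α) D_R(x, x₀). Then for every x ∈ X, D_R(x, x⁺) ≤ D_R(x, x₀) + α ⟨g̃, x − x₀⟩ + (α² / (2 σ_R)) ‖g̃‖*². -/

import Mathlib

set_option autoImplicit false

open MeasureTheory Filter
open scoped RealInnerProductSpace ENNReal

noncomputable section

/-- `ℝ^n` with the standard inner product. -/
abbrev E (n : ℕ) := EuclideanSpace ℝ (Fin n)

/-- `N` is a norm on `ℝ^n` (possibly different from the Euclidean one). -/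
def IsNormFn {n : ℕ} (N : E n → ℝ) : Prop :=
  (∀ x, 0 ≤ N x) ∧ (∀ x, N x = 0 ↔ x = 0) ∧
  (∀ (a : ℝ) (x : E n), N (a • x) = |a| * N x) ∧
  (∀ x y, N (x + y) ≤ N x + N y)

/-- The dual norm `‖x‖* = sup {⟨x,y⟩ : ‖y‖ ≤ 1}` of the norm `N`. -/
def dualNorm {n : ℕ} (N : E n → ℝ) (x : E n) : ℝ :=
  sSup ((fun y => ⟪x, y⟫) '' {y | N y ≤ 1})

/-- The Bregman divergence `D_R(x,y) = R(x) − R(y) − ⟨∇R(y), x − y⟩`. -/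
def bregman {n : ℕ} (R : E n → ℝ) (x y : E n) : ℝ :=
  R x - R y - ⟪gradient R y, x - y⟫

/-- `g` is a subgradient of `f` at `x`. -/
def IsSubgradientAt {n : ℕ} (f : E n → ℝ) (g x : E n) : Prop :=
  ∀ y, f x + ⟪g, y - x⟫ ≤ f y

/-- `R` is `σ`-strongly convex on `S` with respect to the norm `N`. -/
def StrongConvexOnWith {n : ℕ} (S : Set (E n)) (σ : ℝ) (N : E n → ℝ) (R : E n → ℝ) : Prop :=
  ∀ ⦃x⦄, x ∈ S → ∀ ⦃y⦄, y ∈ S → ∀ ⦃t : ℝ⦄, 0 ≤ t → t ≤ 1 →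
    R (t • x + (1 - t) • y) ≤ t * R x + (1 - t) * R y - σ / 2 * t * (1 - t) * (N (x - y)) ^ 2

/-!
Minimality of `x⁺` gives the variational inequality
`⟪∇R x₀ - ∇R x⁺, x - x⁺⟫ ≤ α ⟪g, x - x⁺⟫`, and the three-point identity for Bregman divergences
turns it into `D(x, x⁺) ≤ D(x, x₀) + α ⟪g, x - x₀⟫ + (α ⟪g, x₀ - x⁺⟫ - D(x⁺, x₀))`.
Strong convexity gives `D(x⁺, x₀) ≥ σ/2 ‖x₀ - x⁺‖²`, and the Fenchel–Young inequality
`α ⟪g, z⟫ - σ/2 ‖z‖² ≤ α² ‖g‖*² / (2σ)` bounds the bracket.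
-/

namespace IsNormFn

variable {n : ℕ} {N : E n → ℝ}

lemma map_zero (hN : IsNormFn N) : N 0 = 0 :=
  (hN.2.1 0).mpr rfl

lemma pos_of_ne_zero (hN : IsNormFn N) {x : E n} (hx : x ≠ 0) : 0 < N x :=
  (hN.1 x).lt_of_ne fun h => hx ((hN.2.1 x).mp h.symm)

lemma map_sub_rev (hN : IsNormFn N) (x y : E n) : N (x - y) = N (y - x) := by
  simpa using (hN.2.2.1 (-1) (x - y)).symm

lemma convexOn (hN : IsNormFn N) : ConvexOn ℝ Set.univ N := by
  refine ⟨convex_univ, fun x _ y _ a b ha hb _ => ?_⟩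
  calc N (a • x + b • y) ≤ N (a • x) + N (b • y) := hN.2.2.2 _ _
    _ = a • N x + b • N y := by
      rw [hN.2.2.1, hN.2.2.1, abs_of_nonneg ha, abs_of_nonneg hb, smul_eq_mul, smul_eq_mul]

lemma continuous (hN : IsNormFn N) : Continuous N :=
  continuousOn_univ.mp (hN.convexOn.continuousOn isOpen_univ)

/-- `c` is a positive lower bound of `N` on the compact Euclidean unit sphere. -/
lemma exists_pos_mul_norm_le (hN : IsNormFn N) : ∃ c > 0, ∀ x, c * ‖x‖ ≤ N x := by
  obtain ⟨c, hc, hcN⟩ := (isCompact_sphere (0 : E n) 1).exists_forall_le'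
    hN.continuous.continuousOn fun w hw => hN.pos_of_ne_zero (ne_zero_of_mem_unit_sphere ⟨w, hw⟩)
  refine ⟨c, hc, fun x => ?_⟩
  rcases eq_or_ne x 0 with rfl | hx
  · simp [hN.map_zero]
  have hxpos : 0 < ‖x‖ := norm_pos_iff.mpr hx
  have h := hcN (‖x‖⁻¹ • x) (by simp [norm_smul, hxpos.ne'])
  rw [hN.2.2.1, abs_of_pos (inv_pos.mpr hxpos), le_inv_mul_iff₀ hxpos, mul_comm] at h
  exact h

end IsNormFn

section DualNorm

variable {n : ℕ} {N : E n → ℝ}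

/-- Without this bound the `sSup` in `dualNorm` would take its junk value `0`. -/
lemma bddAbove_inner_unitBall (hN : IsNormFn N) (g : E n) :
    BddAbove ((fun y => ⟪g, y⟫) '' {y | N y ≤ 1}) := by
  obtain ⟨c, hc, hcN⟩ := hN.exists_pos_mul_norm_le
  refine ⟨‖g‖ * (1 / c), Set.forall_mem_image.mpr fun y hy => ?_⟩
  have hy' : ‖y‖ ≤ 1 / c := by
    rw [le_div_iff₀' hc]
    exact (hcN y).trans hy
  exact (real_inner_le_norm g y).trans (mul_le_mul_of_nonneg_left hy' (norm_nonneg g))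

lemma inner_le_dualNorm_mul (hN : IsNormFn N) (g z : E n) : ⟪g, z⟫ ≤ dualNorm N g * N z := by
  rcases eq_or_ne z 0 with rfl | hz
  · simp [hN.map_zero]
  have hNz := hN.pos_of_ne_zero hz
  have hunit : N ((N z)⁻¹ • z) ≤ 1 := by
    rw [hN.2.2.1, abs_of_pos (inv_pos.mpr hNz), inv_mul_cancel₀ hNz.ne']
  have h : ⟪g, (N z)⁻¹ • z⟫ ≤ dualNorm N g :=
    le_csSup (bddAbove_inner_unitBall hN g) ⟨_, hunit, rfl⟩
  rw [real_inner_smul_right, inv_mul_le_iff₀ hNz, mul_comm] at h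
  exact h

/-- The Fenchel–Young inequality for `σ/2 N²`, whose convex conjugate is `‖·‖*² / (2σ)`. -/
lemma mul_inner_sub_le_dualNorm_sq (hN : IsNormFn N) {σ : ℝ} (hσ : 0 < σ) {α : ℝ} (hα : 0 ≤ α)
    (g z : E n) : α * ⟪g, z⟫ - σ / 2 * N z ^ 2 ≤ α ^ 2 / (2 * σ) * dualNorm N g ^ 2 := by
  have h := mul_le_mul_of_nonneg_left (inner_le_dualNorm_mul hN g z) hα
  have hsq : α * (dualNorm N g * N z) - σ / 2 * N z ^ 2 ≤ α ^ 2 / (2 * σ) * dualNorm N g ^ 2 := by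
    rw [← sub_nonneg]
    have hid : α ^ 2 / (2 * σ) * dualNorm N g ^ 2 - (α * (dualNorm N g * N z) - σ / 2 * N z ^ 2)
        = (σ * N z - α * dualNorm N g) ^ 2 / (2 * σ) := by
      field_simp
      ring
    rw [hid]
    positivity
  linarith

end DualNorm

lemma IsMinOn.hasFDerivWithinAt_sub_nonneg {F : Type*} [NormedAddCommGroup F] [NormedSpace ℝ F]
    {f : F → ℝ} {f' : F →L[ℝ] ℝ} {s : Set F} {a x : F} (hs : Convex ℝ s) (h : IsMinOn f s a)
    (hf : HasFDerivWithinAt f f' s a) (ha : a ∈ s) (hx : x ∈ s) : 0 ≤ f' (x - a) :=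
  h.localize.hasFDerivWithinAt_nonneg hf
    (sub_mem_posTangentConeAt_of_segment_subset (hs.segment_subset ha hx))

lemma DifferentiableAt.hasDerivAt_comp_add_smul {F : Type*} [NormedAddCommGroup F]
    [InnerProductSpace ℝ F] [CompleteSpace F] {f : F → ℝ} {p : F} (hf : DifferentiableAt ℝ f p)
    (v : F) : HasDerivAt (fun t : ℝ => f (p + t • v)) ⟪gradient f p, v⟫ 0 := by
  have hline : HasDerivAt (fun t : ℝ => p + t • v) v 0 := by
    simpa using ((hasDerivAt_id (0 : ℝ)).smul_const v).const_add p
  have hfp : HasFDerivAt f (fderiv ℝ f p) (p + (0 : ℝ) • v) := by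
    simpa using hf.hasFDerivAt
  rw [gradient, InnerProductSpace.toDual_symm_apply]
  exact hfp.comp_hasDerivAt 0 hline

section Bregman

variable {n : ℕ}

lemma bregman_three_point (R : E n → ℝ) (x y z : E n) :
    bregman R x z = bregman R x y - bregman R z y + ⟪gradient R y - gradient R z, x - z⟫ := by
  simp only [bregman, inner_sub_left, inner_sub_right]
  ring

lemma hasGradientAt_bregman_left {R : E n → ℝ} {x : E n} (hR : DifferentiableAt ℝ R x)
    (y : E n) : HasGradientAt (fun z => bregman R z y) (gradient R x - gradient R y) x := by
  rw [hasGradientAt_iff_hasFDerivAt]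
  have hlin := (innerSL ℝ (gradient R y)).hasFDerivAt.comp x ((hasFDerivAt_id x).sub_const y)
  refine ((hR.hasFDerivAt.sub_const (R y)).sub hlin).congr_fderiv ?_
  ext v
  simp [inner_gradient_left]

/-- Strong convexity bounds the Bregman divergence from below: differentiate the defining
inequality along the segment from `y` to `x` at `y`. -/
lemma StrongConvexOnWith.le_bregman {N : E n → ℝ} {U : Set (E n)} {σ : ℝ} {R : E n → ℝ}
    (hR : StrongConvexOnWith U σ N R) {x y : E n} (hx : x ∈ U) (hy : y ∈ U)
    (hRy : DifferentiableAt ℝ R y) : σ / 2 * N (x - y) ^ 2 ≤ bregman R x y := by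
  set A := N (x - y) ^ 2
  let gap : ℝ → ℝ := fun t =>
    t * R x + (1 - t) * R y - σ / 2 * t * (1 - t) * A - R (y + t • (x - y))
  have hgap : HasDerivAt gap (R x - R y - σ / 2 * A - ⟪gradient R y, x - y⟫) 0 := by
    have hpoly : HasDerivAt (fun t : ℝ => t * R x + (1 - t) * R y - σ / 2 * t * (1 - t) * A)
        (R x - R y - σ / 2 * A) 0 := by
      have hid := hasDerivAt_id (0 : ℝ)
      have h1 := (hasDerivAt_const (0 : ℝ) (1 : ℝ)).sub hid
      refine (((hid.mul_const (R x)).add (h1.mul_const (R y))).sub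
        (((hid.const_mul (σ / 2)).mul h1).mul_const A)).congr_deriv ?_
      simp only [Pi.sub_apply, id, sub_zero]
      ring
    exact hpoly.sub (hRy.hasDerivAt_comp_add_smul (x - y))
  have hmin : IsMinOn gap (Set.Icc 0 1) 0 := isMinOn_iff.mpr fun t ht => by
    have h := hR hx hy ht.1 ht.2
    rw [show t • x + (1 - t) • y = y + t • (x - y) by module] at h
    simp only [gap, zero_smul, add_zero]
    linarith
  have h := hmin.hasFDerivWithinAt_sub_nonneg (convex_Icc 0 1) hgap.hasFDerivAt.hasFDerivWithinAt
    (Set.left_mem_Icc.mpr zero_le_one) (Set.right_mem_Icc.mpr zero_le_one)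
  simp only [sub_zero, ContinuousLinearMap.toSpanSingleton_apply, one_smul] at h
  simp only [bregman]
  linarith

lemma inner_gradient_sub_le_of_isMinOn {S : Set (E n)} (hS : Convex ℝ S) {R : E n → ℝ}
    {g x₀ xp x : E n} {α : ℝ} (hα : 0 < α) (hR : DifferentiableAt ℝ R xp)
    (hmin : IsMinOn (fun y => ⟪g, y - x₀⟫ + (1 / α) * bregman R y x₀) S xp) (hxp : xp ∈ S)
    (hx : x ∈ S) : ⟪gradient R x₀ - gradient R xp, x - xp⟫ ≤ α * ⟪g, x - xp⟫ := by
  have hφ := ((innerSL ℝ g).hasFDerivAt.comp xp ((hasFDerivAt_id xp).sub_const x₀)).add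
    ((hasGradientAt_iff_hasFDerivAt.mp (hasGradientAt_bregman_left hR x₀)).const_mul (1 / α))
  have h := hmin.hasFDerivWithinAt_sub_nonneg hS hφ.hasFDerivWithinAt hxp hx
  simp only [add_apply, ContinuousLinearMap.comp_apply, ContinuousLinearMap.id_apply, smul_apply,
    InnerProductSpace.toDual_apply_apply, innerSL_apply_apply, smul_eq_mul] at h
  have h' := mul_nonneg hα.le h
  rw [mul_add, ← mul_assoc, mul_one_div_cancel hα.ne', one_mul] at h'
  rw [← neg_sub, inner_neg_left]
  linarith

end Bregman

theorem smd_bregman_descent_inequality_general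
    {n : ℕ}
    (N : E n → ℝ) (hN : IsNormFn N)
    (𝒳 : Set (E n)) (hXconv : Convex ℝ 𝒳)
    (R : E n → ℝ) (U : Set (E n)) (hXU : 𝒳 ⊆ U)
    (hRdiff : ∀ x ∈ U, DifferentiableAt ℝ R x)
    (σR : ℝ) (hσR : 0 < σR) (hRsc : StrongConvexOnWith U σR N R)
    (x₀ : E n) (hx₀ : x₀ ∈ 𝒳) (gv : E n) (α : ℝ) (hα : 0 < α)
    (xp : E n) (hxp : xp ∈ 𝒳)
    (hmin : ∀ y ∈ 𝒳, ⟪gv, xp - x₀⟫ + (1 / α) * bregman R xp x₀ ≤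
      ⟪gv, y - x₀⟫ + (1 / α) * bregman R y x₀) :
    ∀ x ∈ 𝒳, bregman R x xp ≤
      bregman R x x₀ + α * ⟪gv, x - x₀⟫ + α ^ 2 / (2 * σR) * (dualNorm N gv) ^ 2 := by
  intro x hx
  have hopt := inner_gradient_sub_le_of_isMinOn hXconv hα (hRdiff xp (hXU hxp))
    (isMinOn_iff.mpr hmin) hxp hx
  have hsc := hRsc.le_bregman (hXU hxp) (hXU hx₀) (hRdiff x₀ (hXU hx₀))
  have hyoung := mul_inner_sub_le_dualNorm_sq hN hσR hα.le gv (x₀ - xp)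
  have hsplit : ⟪gv, x - xp⟫ = ⟪gv, x - x₀⟫ + ⟪gv, x₀ - xp⟫ := by
    rw [← inner_add_right, sub_add_sub_cancel]
  rw [hsplit, mul_add] at hopt
  rw [hN.map_sub_rev] at hsc
  rw [bregman_three_point R x x₀ xp]
  linarith

theorem smd_bregman_descent_inequality
    {n : ℕ}
    (N : E n → ℝ) (hN : IsNormFn N)
    (𝒳 : Set (E n)) (hXconv : Convex ℝ 𝒳) (hXcomp : IsCompact 𝒳)
    (R : E n → ℝ) (U : Set (E n)) (hUopen : IsOpen U) (hXU : 𝒳 ⊆ U)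
    (hRdiff : ∀ x ∈ U, DifferentiableAt ℝ R x)
    (σR : ℝ) (hσR : 0 < σR) (hRsc : StrongConvexOnWith U σR N R)
    (x₀ : E n) (hx₀ : x₀ ∈ 𝒳) (gv : E n) (α : ℝ) (hα : 0 < α)
    (xp : E n) (hxp : xp ∈ 𝒳)
    (hmin : ∀ y ∈ 𝒳, ⟪gv, xp - x₀⟫ + (1 / α) * bregman R xp x₀ ≤
      ⟪gv, y - x₀⟫ + (1 / α) * bregman R y x₀) :
    ∀ x ∈ 𝒳, bregman R x xp ≤
      bregman R x x₀ + α * ⟪gv, x - x₀⟫ + α ^ 2 / (2 * σR) * (dualNorm N gv) ^ 2 :=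
  smd_bregman_descent_inequality_general N hN 𝒳 hXconv R U hXU hRdiff σR hσR hRsc x₀ hx₀ gv α hα xp
    hxp hmin
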